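/- arXiv:1305.1694 — 2 statements merged into one kernel-verified Lean document; each statement's English description precedes it below -/
import Mathlib

section
/- Let k = 6/5 and define f_k(z) = ((1+k)/2 − z)^((1+k)/(2k)) · (z + (k−1)/2)^((k−1)/(2k)) for z ∈ [0,1]. Then for every z ∈ [0,1], 1 + f_k(1−z) + ∫_z^1 (1−t)/f_k(t) dt ≤ 1.901. -/
/-!
With `a = (1+k)/2`, `b = (k-1)/2`, `p = (1+k)/(2k)`, `q = (k-1)/(2k)` we have
`f_k z = (a-z)^p (z+b)^q`, `p + q = 1` and `p a - q b = 1`. Hence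
`u ↦ f_k (1-u) = (u+b)^p (a-u)^q` has derivative
`(p(a-u) - q(u+b)) / ((a-u)^p (u+b)^q) = (1-u) / f_k u`, so the integral telescopes
to `f_k 0 - f_k (1-z)` and the ratio expression is the constant `1 + f_k 0`. For `k = 6/5`,
`f_k 0 = (11/10)^(11/12) (1/10)^(1/12)`, whose twelfth power `11¹¹/10¹²` is below `0.901¹²`.
-/

open Real Set

noncomputable def fk (k z : ℝ) : ℝ :=
  ((1 + k) / 2 - z) ^ ((1 + k) / (2 * k)) * (z + (k - 1) / 2) ^ ((k - 1) / (2 * k))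

theorem hasDerivAt_rpow_mul_rpow {a b p q u : ℝ} (hpq : p + q = 1) (ha : 0 < a - u)
    (hb : 0 < u + b) :
    HasDerivAt (fun v => (v + b) ^ p * (a - v) ^ q)
      ((p * a - q * b - u) / ((a - u) ^ p * (u + b) ^ q)) u := by
  have hB : HasDerivAt (fun v => (v + b) ^ p) (p * (u + b) ^ (p - 1)) u := by
    simpa using ((hasDerivAt_id u).add_const b).rpow_const (p := p) (Or.inl hb.ne')
  have hA : HasDerivAt (fun v => (a - v) ^ q) (-(q * (a - u) ^ (q - 1))) u := by
    simpa using ((hasDerivAt_id u).const_sub a).rpow_const (p := q) (Or.inl ha.ne')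
  refine (hB.mul hA).congr_deriv ?_
  have hbpq : (u + b) ^ p * (u + b) ^ q = u + b := by
    rw [← rpow_add hb, hpq, rpow_one]
  have hapq : (a - u) ^ q * (a - u) ^ p = a - u := by
    rw [← rpow_add ha, add_comm, hpq, rpow_one]
  rw [rpow_sub_one hb.ne', rpow_sub_one ha.ne']
  have := rpow_pos_of_pos hb q
  have := rpow_pos_of_pos ha p
  field_simp
  linear_combination ((a - u) ^ q * (a - u) ^ p * (p * (a - u) - (u + b) * q)) * hbpq
    + ((u + b) * (p * (a - u) - (u + b) * q)) * hapq - ((u + b) * (a - u) * u) * hpq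

section

variable {k u z : ℝ}

theorem fk_pos (h₁ : 0 < (1 + k) / 2 - z) (h₂ : 0 < z + (k - 1) / 2) : 0 < fk k z :=
  mul_pos (rpow_pos_of_pos h₁ _) (rpow_pos_of_pos h₂ _)

theorem continuous_fk (hk : 1 ≤ k) : Continuous (fk k) := by
  have hk₀ : 0 < k := by linarith
  refine ((continuous_const.sub continuous_id).rpow_const fun _ => Or.inr ?_).mul
    ((continuous_id.add continuous_const).rpow_const fun _ => Or.inr ?_)
  · positivity
  · exact div_nonneg (by linarith) (by positivity)

theorem hasDerivAt_fk_one_sub (hk : k ≠ 0) (h₁ : 0 < (1 + k) / 2 - u)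
    (h₂ : 0 < u + (k - 1) / 2) :
    HasDerivAt (fun v => fk k (1 - v)) ((1 - u) / fk k u) u := by
  have hpq : (1 + k) / (2 * k) + (k - 1) / (2 * k) = 1 := by field_simp; ring
  have hcoef : (1 + k) / (2 * k) * ((1 + k) / 2) - (k - 1) / (2 * k) * ((k - 1) / 2) = 1 := by
    field_simp; ring
  have h := hasDerivAt_rpow_mul_rpow hpq h₁ h₂
  rw [hcoef] at h
  have hfun : (fun v => fk k (1 - v)) = fun v =>
      (v + (k - 1) / 2) ^ ((1 + k) / (2 * k)) * ((1 + k) / 2 - v) ^ ((k - 1) / (2 * k)) := by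
    ext v
    unfold fk
    ring_nf
  rwa [hfun]

theorem integral_one_sub_div_fk (hk : 1 < k) (hz : z ∈ Icc (0 : ℝ) 1) :
    ∫ t in z..1, (1 - t) / fk k t = fk k 0 - fk k (1 - z) := by
  have hbases : ∀ t ∈ Icc z 1, 0 < (1 + k) / 2 - t ∧ 0 < t + (k - 1) / 2 := fun t ht =>
    ⟨by linarith [ht.2], by linarith [hz.1, ht.1]⟩
  have hderiv : ∀ t ∈ uIcc z 1, HasDerivAt (fun v => fk k (1 - v)) ((1 - t) / fk k t) t :=
    fun t ht => by
      rw [uIcc_of_le hz.2] at ht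
      exact hasDerivAt_fk_one_sub (by positivity) (hbases t ht).1 (hbases t ht).2
  have hcont : ContinuousOn (fun t => (1 - t) / fk k t) (uIcc z 1) := by
    rw [uIcc_of_le hz.2]
    exact (continuous_const.sub continuous_id).continuousOn.div
      (continuous_fk hk.le).continuousOn
      fun t ht => (fk_pos (hbases t ht).1 (hbases t ht).2).ne'
  rw [intervalIntegral.integral_eq_sub_of_hasDerivAt hderiv hcont.intervalIntegrable, sub_self]

theorem fk_six_fifths_zero_le : fk (6 / 5) 0 ≤ 0.901 := by
  have h : fk (6 / 5) 0 =
      (11 / 10 : ℝ) ^ ((11 : ℝ) / 12) * (1 / 10 : ℝ) ^ ((1 : ℝ) / 12) := by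
    unfold fk; norm_num
  have hpow : fk (6 / 5) 0 ^ 12 = (11 / 10 : ℝ) ^ 11 * (1 / 10) := by
    rw [h, mul_pow, ← rpow_natCast _ 12, ← rpow_natCast _ 12, ← rpow_mul (by norm_num),
      ← rpow_mul (by norm_num)]
    norm_num
  refine le_of_pow_le_pow_left₀ (n := 12) (by norm_num) (by norm_num) ?_
  rw [hpow]
  norm_num

end

/-- Numerical bound: for `k = 6/5` and
`f_k z = ((1+k)/2 - z)^((1+k)/(2k)) · (z + (k-1)/2)^((k-1)/(2k))`,
the competitive-ratio expression `1 + f_k (1-z) + ∫_z^1 (1-t)/f_k t dt` is at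
most `1.901` for every `z ∈ [0,1]`. -/
theorem fk_ratio_bound (k : ℝ) (hk : k = 6 / 5) (f : ℝ → ℝ)
    (hf : ∀ z, f z = ((1 + k) / 2 - z) ^ ((1 + k) / (2 * k)) *
                     (z + (k - 1) / 2) ^ ((k - 1) / (2 * k))) :
    ∀ z ∈ Set.Icc (0:ℝ) 1,
      1 + f (1 - z) + (∫ t in z..1, (1 - t) / f t) ≤ 1.901 := by
  subst hk
  obtain rfl : f = fk (6 / 5) := funext hf
  intro z hz
  rw [integral_one_sub_div_fk (by norm_num) hz]
  linarith [fk_six_fifths_zero_le]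
end

section
/- Let k = 6/5 and f_k(z) = ((1+k)/2 − z)^((1+k)/(2k)) · (z + (k−1)/2)^((k−1)/(2k)). Let G = (V,E) be any finite simple graph with any arrival order v_1, …, v_n of its vertices, and run GreedyAllocation with allocation function f_k, producing final potentials y : V → [0,1]. Then y is a fractional vertex cover of G, and for every fractional vertex cover y* of G, Σ_{v∈V} y_v ≤ 1.901 · Σ_{v∈V} y*_v. -/
open Finset

/-- The water level chosen by `GreedyAllocation` with allocation function `f`:
the supremum of `t ∈ [0,1]` such that raising all potentials in `S` up to `t`
costs at most `f t`. -/
noncomputable def waterLevel {ι : Type*} (f : ℝ → ℝ) (S : Finset ι) (y : ι → ℝ) : ℝ :=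
  sSup {t ∈ Set.Icc (0:ℝ) 1 | ∑ u ∈ S, max (t - y u) 0 ≤ f t}

/-- The previously arrived neighbors of vertex `i` (vertices arrive in the
order `0, 1, …, n-1`; `E` is the adjacency predicate of the graph). -/
def neighborsBefore {n : ℕ} (E : Fin n → Fin n → Bool) (i : Fin n) : Finset (Fin n) :=
  Finset.univ.filter fun j => j < i ∧ E j i = true

/-- Potentials maintained by `GreedyAllocation` with allocation function `f`
after `i` vertices have been processed. When vertex `i` arrives, the water
level `w` is computed over its previously arrived neighbors; each such
neighbor's potential is raised to at least `w`, and vertex `i` receives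
potential `1 - w`. -/
noncomputable def greedyPotential (f : ℝ → ℝ) {n : ℕ} (E : Fin n → Fin n → Bool) :
    ℕ → Fin n → ℝ
  | 0 => fun _ => 0
  | (i + 1) => fun v =>
      if h : i < n then
        let vi : Fin n := ⟨i, h⟩
        let w := waterLevel f (neighborsBefore E vi) (greedyPotential f E i)
        if v = vi then 1 - w
        else if v ∈ neighborsBefore E vi then max (greedyPotential f E i v) w
        else greedyPotential f E i v
      else greedyPotential f E i v

/-- The water level used when processing vertex `i`. -/
noncomputable def stepLevel (f : ℝ → ℝ) {n : ℕ} (E : Fin n → Fin n → Bool) (i : Fin n) : ℝ :=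
  waterLevel f (neighborsBefore E i) (greedyPotential f E i.val)

/-- The edge values set by the `PrimalDual` algorithm: when vertex `i` arrives,
for each previously arrived neighbor `j` the edge `(j,i)` receives value
`(max(w_i - y_j, 0)/β)·(1 + (1 - w_i)/f(w_i))`, using the potentials before
updating; all other pairs get `0`. -/
noncomputable def pdEdge (f : ℝ → ℝ) (β : ℝ) {n : ℕ} (E : Fin n → Fin n → Bool)
    (j i : Fin n) : ℝ :=
  if j < i ∧ E j i = true then
    (max (stepLevel f E i - greedyPotential f E i.val j) 0 / β) *
      (1 + (1 - stepLevel f E i) / f (stepLevel f E i))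
  else 0

/-!
Feasibility is immediate: potentials stay in `[0,1]`, and when the later endpoint of an edge
arrives with level `w` it receives `1 - w` while its earlier neighbour is raised to at least `w`.

The ratio comes from dual fitting. When vertex `i` arrives with level `w` and raises its earlier
neighbours by `δ_j`, the edge `ji` gets `δ_j (1 + (1 - w) / f w) / β`. The level is tight
(`∑ δ_j ≥ f w` unless `w = 1`), so `β` times the new dual mass pays for the primal increase
`(1 - w) + ∑ δ_j`. A vertex `v` collects `f w + (1 - w) = H (1 - w)` at its own arrival, where
`H z = z + f (1 - z)`, and at most `H y' - H y` whenever its potential is later raised from `y`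
to `y'`; this is the tangent inequality of `f`. So the load on `v` telescopes to at most
`H y_v ≤ 1 + f 0`, for `β = 1 + f 0` the dual is a fractional matching, and weak duality bounds
it by any fractional vertex cover.

For `f = f_k` the tangent inequality is weighted AM-GM combined with the identity
`f_k z * f_k (1 - z) = ((1 + k) / 2 - z) * (z + (k - 1) / 2)`, and `f_{6/5} 0 < 0.901`.
-/

structure IsAdmissibleAllocation (f : ℝ → ℝ) : Prop where
  continuousOn : ContinuousOn f (Set.Icc 0 1)
  pos : ∀ z ∈ Set.Icc (0 : ℝ) 1, 0 < f z
  /-- For smooth `f` this is concavity together with `f' z = -z / f (1 - z)`, the equation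
  solved by `f_k`. -/
  le_tangent : ∀ s t, 0 ≤ s → s ≤ t → t ≤ 1 → f t ≤ f s - s / f (1 - s) * (t - s)

namespace IsAdmissibleAllocation

variable {f : ℝ → ℝ}

lemma le_apply_zero (hf : IsAdmissibleAllocation f) {t : ℝ} (ht₀ : 0 ≤ t) (ht₁ : t ≤ 1) :
    f t ≤ f 0 := by
  simpa using hf.le_tangent 0 t le_rfl ht₀ ht₁

lemma max_sub_mul_le (hf : IsAdmissibleAllocation f) {y w : ℝ} (hy₀ : 0 ≤ y)
    (hw₁ : w ≤ 1) :
    max (w - y) 0 * (1 + (1 - w) / f w) ≤ (max y w + f (1 - max y w)) - (y + f (1 - y)) := by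
  rcases le_total w y with hwy | hyw
  · simp [hwy]
  · have h := hf.le_tangent (1 - w) (1 - y) (by linarith) (by linarith) (by linarith)
    rw [sub_sub_cancel] at h
    rw [max_eq_left (sub_nonneg.2 hyw), max_eq_right hyw]
    nlinarith

end IsAdmissibleAllocation

lemma Fin.sum_univ_sub {M : Type*} [AddCommGroup M] (n : ℕ) (g : ℕ → M) :
    ∑ i : Fin n, (g (i + 1) - g i) = g n - g 0 := by
  rw [Fin.sum_univ_eq_sum_range (fun m => g (m + 1) - g m), sum_range_sub]

lemma sum_sum_le_sum_of_load_le_one {ι : Type*} [Fintype ι] {x : ι → ι → ℝ} {y : ι → ℝ}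
    (hx : ∀ i j, 0 ≤ x i j) (hxy : ∀ i j, 0 < x i j → 1 ≤ y i + y j) (hy : ∀ v, 0 ≤ y v)
    (hload : ∀ v, ∑ u, x u v + ∑ u, x v u ≤ 1) : ∑ i, ∑ j, x i j ≤ ∑ v, y v := by
  have hcover (i j : ι) : x i j ≤ x i j * (y i + y j) := by
    rcases (hx i j).eq_or_lt with h | h
    · simp [← h]
    · exact le_mul_of_one_le_right h.le (hxy i j h)
  calc ∑ i, ∑ j, x i j ≤ ∑ i, ∑ j, x i j * (y i + y j) :=
        sum_le_sum fun i _ => sum_le_sum fun j _ => hcover i j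
    _ = ∑ v, (∑ u, x u v + ∑ u, x v u) * y v := by
        simp only [mul_add, add_mul, sum_add_distrib, sum_mul]
        rw [add_comm, sum_comm (f := fun i j => x i j * y j)]
    _ ≤ ∑ v, y v := sum_le_sum fun v _ => mul_le_of_le_one_left (hy v) (hload v)

section WaterLevel

variable {ι : Type*} (f : ℝ → ℝ) (S : Finset ι) (y : ι → ℝ)

-- Also when the defining set is empty, as `sSup ∅ = 0` in `ℝ`.
lemma waterLevel_mem_Icc : waterLevel f S y ∈ Set.Icc (0 : ℝ) 1 :=
  ⟨Real.sSup_nonneg fun _ ht => ht.1.1, Real.sSup_le (fun _ ht => ht.1.2) zero_le_one⟩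

lemma sum_max_sub_waterLevel_le (hf : ContinuousOn f (Set.Icc 0 1)) (hf₀ : 0 ≤ f 0)
    (hy : ∀ u ∈ S, 0 ≤ y u) :
    ∑ u ∈ S, max (waterLevel f S y - y u) 0 ≤ f (waterLevel f S y) := by
  have hclosed : IsClosed {t ∈ Set.Icc (0 : ℝ) 1 | ∑ u ∈ S, max (t - y u) 0 ≤ f t} :=
    isClosed_Icc.isClosed_le (by fun_prop) hf
  have hzero : (0 : ℝ) ∈ {t ∈ Set.Icc (0 : ℝ) 1 | ∑ u ∈ S, max (t - y u) 0 ≤ f t} := by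
    refine ⟨Set.left_mem_Icc.2 zero_le_one, ?_⟩
    rwa [sum_eq_zero fun u hu => max_eq_right (by linarith [hy u hu])]
  exact (hclosed.csSup_mem ⟨0, hzero⟩ ⟨1, fun _ ht => ht.1.2⟩).2

lemma le_sum_max_sub_waterLevel (hf : ContinuousOn f (Set.Icc 0 1))
    (hlt : waterLevel f S y < 1) :
    f (waterLevel f S y) ≤ ∑ u ∈ S, max (waterLevel f S y - y u) 0 := by
  set w := waterLevel f S y
  by_contra! hcon
  have hw := waterLevel_mem_Icc f S y
  have hcont : ContinuousWithinAt (fun t => ∑ u ∈ S, max (t - y u) 0 - f t) (Set.Ioo w 1) w :=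
    ((continuous_finsetSum _ fun u _ => by fun_prop).continuousOn.sub hf w hw).mono
      fun t ht => ⟨hw.1.trans ht.1.le, ht.2.le⟩
  rw [ContinuousWithinAt, nhdsWithin_Ioo_eq_nhdsGT hlt] at hcont
  obtain ⟨t, hneg, hwt, ht₁⟩ :=
    ((hcont.eventually_lt_const (sub_neg.2 hcon)).and (Ioo_mem_nhdsGT hlt)).exists
  have : t ≤ w := le_csSup ⟨1, fun _ ht => ht.1.2⟩ ⟨⟨hw.1.trans hwt.le, ht₁.le⟩, by linarith⟩
  linarith

end WaterLevel

section Greedy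

variable (f : ℝ → ℝ) {n : ℕ} (E : Fin n → Fin n → Bool)

lemma greedyPotential_zero : greedyPotential f E 0 = 0 := rfl

lemma greedyPotential_succ (i v : Fin n) :
    greedyPotential f E (i + 1) v =
      if v = i then 1 - stepLevel f E i
      else if v ∈ neighborsBefore E i then max (greedyPotential f E i v) (stepLevel f E i)
      else greedyPotential f E i v := by
  simp only [greedyPotential, i.isLt, dif_pos]
  rfl

lemma greedyPotential_succ_of_le {m : ℕ} (hm : n ≤ m) :
    greedyPotential f E (m + 1) = greedyPotential f E m := by
  funext v
  simp [greedyPotential, hm.not_gt]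

lemma greedyPotential_succ_self (i : Fin n) :
    greedyPotential f E (i + 1) i = 1 - stepLevel f E i := by
  simp [greedyPotential_succ]

lemma greedyPotential_succ_of_mem {i j : Fin n} (hj : j ∈ neighborsBefore E i) :
    greedyPotential f E (i + 1) j = max (greedyPotential f E i j) (stepLevel f E i) := by
  have hji : j ≠ i := ((mem_filter.1 hj).2.1).ne
  simp [greedyPotential_succ, hji, hj]

lemma greedyPotential_succ_of_notMem {i v : Fin n} (hvi : v ≠ i)
    (hv : v ∉ neighborsBefore E i) : greedyPotential f E (i + 1) v = greedyPotential f E i v := by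
  simp [greedyPotential_succ, hvi, hv]

lemma stepLevel_mem_Icc (i : Fin n) : stepLevel f E i ∈ Set.Icc (0 : ℝ) 1 :=
  waterLevel_mem_Icc _ _ _

lemma greedyPotential_eq_zero_of_le {v : Fin n} :
    ∀ {m : ℕ}, m ≤ v → greedyPotential f E m v = 0
  | 0, _ => congrFun (greedyPotential_zero f E) v
  | m + 1, hm => by
    let i : Fin n := ⟨m, by omega⟩
    have hv : v ∉ neighborsBefore E i := by
      simp only [neighborsBefore, mem_filter, Fin.lt_def, i]
      omega
    rw [greedyPotential_succ_of_notMem f E (i := i) (Fin.ne_of_gt (Fin.lt_def.2 hm)) hv]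
    exact greedyPotential_eq_zero_of_le (m := m) (by omega)

lemma greedyPotential_mem_Icc :
    ∀ (m : ℕ) (v : Fin n), greedyPotential f E m v ∈ Set.Icc (0 : ℝ) 1
  | 0, _ => Set.left_mem_Icc.2 zero_le_one
  | m + 1, v => by
    rcases lt_or_ge m n with hm | hm
    · obtain ⟨hw₀, hw₁⟩ := stepLevel_mem_Icc f E ⟨m, hm⟩
      obtain ⟨hy₀, hy₁⟩ := greedyPotential_mem_Icc m v
      rw [greedyPotential_succ f E ⟨m, hm⟩]
      split_ifs
      · exact ⟨by linarith, by linarith⟩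
      · exact ⟨hy₀.trans (le_max_left _ _), max_le hy₁ hw₁⟩
      · exact ⟨hy₀, hy₁⟩
    · rw [greedyPotential_succ_of_le f E hm]
      exact greedyPotential_mem_Icc m v

lemma greedyPotential_mono (v : Fin n) : Monotone (greedyPotential f E · v) := by
  refine monotone_nat_of_le_succ fun m => ?_
  rcases lt_or_ge m n with hm | hm
  · rw [greedyPotential_succ f E ⟨m, hm⟩]
    split_ifs with hv
    · rw [greedyPotential_eq_zero_of_le f E (by simp [hv])]
      exact sub_nonneg.2 (stepLevel_mem_Icc f E _).2
    · exact le_max_left _ _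
    · exact le_rfl
  · rw [greedyPotential_succ_of_le f E hm]

lemma one_le_greedyPotential_add_of_lt {i j : Fin n} (hij : i < j) (hE : E i j = true) :
    1 ≤ greedyPotential f E n i + greedyPotential f E n j := by
  have hi : i ∈ neighborsBefore E j := mem_filter.2 ⟨mem_univ _, hij, hE⟩
  have hle : greedyPotential f E (j + 1) i ≤ greedyPotential f E n i :=
    greedyPotential_mono f E i j.isLt
  have hle' : greedyPotential f E (j + 1) j ≤ greedyPotential f E n j :=
    greedyPotential_mono f E j j.isLt
  rw [greedyPotential_succ_of_mem f E hi] at hle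
  rw [greedyPotential_succ_self] at hle'
  linarith [le_max_right (greedyPotential f E j i) (stepLevel f E j)]

lemma one_le_greedyPotential_add (hsymm : ∀ i j, E i j = E j i) (hloop : ∀ i, E i i = false)
    (i j : Fin n) (hE : E i j = true) :
    1 ≤ greedyPotential f E n i + greedyPotential f E n j := by
  rcases lt_trichotomy i j with hij | rfl | hji
  · exact one_le_greedyPotential_add_of_lt f E hij hE
  · simp [hloop] at hE
  · rw [add_comm]
    exact one_le_greedyPotential_add_of_lt f E hji (hsymm i j ▸ hE)

lemma sum_greedyPotential_succ (i : Fin n) :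
    ∑ v, greedyPotential f E (i + 1) v = ∑ v, greedyPotential f E i v +
      ((1 - stepLevel f E i) +
        ∑ j ∈ neighborsBefore E i, max (stepLevel f E i - greedyPotential f E i j) 0) := by
  have hi : i ∉ neighborsBefore E i := by simp [neighborsBefore]
  have hdiff : ∀ v ∉ insert i (neighborsBefore E i),
      greedyPotential f E (i + 1) v - greedyPotential f E i v = 0 := fun v hv => by
    rw [mem_insert, not_or] at hv
    rw [greedyPotential_succ_of_notMem f E hv.1 hv.2, sub_self]
  rw [← sub_eq_iff_eq_add', ← sum_sub_distrib, ← sum_subset (subset_univ _) fun v _ => hdiff v,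
    sum_insert hi, greedyPotential_succ_self, greedyPotential_eq_zero_of_le f E le_rfl, sub_zero]
  congr 1
  refine sum_congr rfl fun j hj => ?_
  rw [greedyPotential_succ_of_mem f E hj, ← max_sub_sub_right, sub_self, max_comm]

end Greedy

section Dual

variable {f : ℝ → ℝ} {β : ℝ} {n : ℕ} (E : Fin n → Fin n → Bool)

lemma mul_pdEdge (hβ : β ≠ 0) (j i : Fin n) :
    β * pdEdge f β E j i = if j ∈ neighborsBefore E i then
      max (stepLevel f E i - greedyPotential f E i j) 0 *
        (1 + (1 - stepLevel f E i) / f (stepLevel f E i)) else 0 := by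
  simp only [pdEdge, neighborsBefore, mem_filter, mem_univ, true_and]
  split_ifs
  · field_simp
  · exact mul_zero β

lemma mul_sum_pdEdge_left (hβ : β ≠ 0) (i : Fin n) :
    β * ∑ j, pdEdge f β E j i =
      (∑ j ∈ neighborsBefore E i, max (stepLevel f E i - greedyPotential f E i j) 0) *
        (1 + (1 - stepLevel f E i) / f (stepLevel f E i)) := by
  simp only [mul_sum, mul_pdEdge E hβ, sum_ite_mem, univ_inter, sum_mul]

namespace IsAdmissibleAllocation

lemma pdEdge_nonneg (hf : IsAdmissibleAllocation f) (hβ : 0 < β) (j i : Fin n) :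
    0 ≤ pdEdge f β E j i := by
  obtain ⟨hw₀, hw₁⟩ := stepLevel_mem_Icc f E i
  have := hf.pos _ ⟨hw₀, hw₁⟩
  unfold pdEdge
  split_ifs
  · have : 0 ≤ (1 - stepLevel f E i) / f (stepLevel f E i) := div_nonneg (by linarith) this.le
    positivity
  · exact le_rfl

lemma le_mul_sum_pdEdge_left (hf : IsAdmissibleAllocation f) (hβ : β ≠ 0) (i : Fin n) :
    (1 - stepLevel f E i) +
        ∑ j ∈ neighborsBefore E i, max (stepLevel f E i - greedyPotential f E i j) 0 ≤
      β * ∑ j, pdEdge f β E j i := by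
  obtain ⟨hw₀, hw₁⟩ := stepLevel_mem_Icc f E i
  rw [mul_sum_pdEdge_left E hβ, mul_one_add, add_comm]
  gcongr
  rcases hw₁.eq_or_lt with hw | hw
  · simp [hw]
  · have hfw := hf.pos _ ⟨hw₀, hw₁⟩
    calc 1 - stepLevel f E i
        = f (stepLevel f E i) * ((1 - stepLevel f E i) / f (stepLevel f E i)) := by field_simp
      _ ≤ _ := by
        gcongr
        exact le_sum_max_sub_waterLevel f _ _ hf.continuousOn hw

lemma mul_sum_pdEdge_left_le (hf : IsAdmissibleAllocation f) (hβ : β ≠ 0) (i : Fin n) :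
    β * ∑ j, pdEdge f β E j i ≤ f (stepLevel f E i) + (1 - stepLevel f E i) := by
  obtain ⟨hw₀, hw₁⟩ := stepLevel_mem_Icc f E i
  have hfw := hf.pos _ ⟨hw₀, hw₁⟩
  rw [mul_sum_pdEdge_left E hβ]
  calc _ ≤ f (stepLevel f E i) * (1 + (1 - stepLevel f E i) / f (stepLevel f E i)) := by
        gcongr
        exact sum_max_sub_waterLevel_le f _ _ hf.continuousOn
          (hf.pos 0 ⟨le_rfl, zero_le_one⟩).le fun u _ => (greedyPotential_mem_Icc f E _ u).1
    _ = f (stepLevel f E i) + (1 - stepLevel f E i) := by field_simp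

lemma mul_pdEdge_le_of_lt (hf : IsAdmissibleAllocation f) (hβ : β ≠ 0) {v i : Fin n}
    (hvi : v < i) :
    β * pdEdge f β E v i ≤
      (greedyPotential f E (i + 1) v + f (1 - greedyPotential f E (i + 1) v)) -
        (greedyPotential f E i v + f (1 - greedyPotential f E i v)) := by
  rw [mul_pdEdge E hβ]
  split_ifs with hv
  · rw [greedyPotential_succ_of_mem f E hv]
    exact hf.max_sub_mul_le (greedyPotential_mem_Icc f E _ v).1 (stepLevel_mem_Icc f E i).2
  · rw [greedyPotential_succ_of_notMem f E hvi.ne hv, sub_self]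

lemma mul_sum_pdEdge_right_le (hf : IsAdmissibleAllocation f) (hβ : β ≠ 0) (v : Fin n) :
    β * ∑ i, pdEdge f β E v i ≤
      (greedyPotential f E n v + f (1 - greedyPotential f E n v)) -
        (greedyPotential f E (v + 1) v + f (1 - greedyPotential f E (v + 1) v)) := by
  -- `H` is frozen until the arrival of `v`, so the telescoping sum starts at `v + 1`.
  let H : ℕ → ℝ := fun m =>
    greedyPotential f E (max m (v + 1)) v + f (1 - greedyPotential f E (max m (v + 1)) v)
  have hstep (i : Fin n) : β * pdEdge f β E v i ≤ H (i + 1) - H i := by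
    by_cases hvi : v < i
    · have hvi' : (v : ℕ) + 1 ≤ i := hvi
      simp only [H, max_eq_left hvi', max_eq_left (hvi'.trans (Nat.le_succ _))]
      exact mul_pdEdge_le_of_lt E hf hβ hvi
    · have hiv : (i : ℕ) + 1 ≤ v + 1 := by simpa using not_lt.1 hvi
      simp [H, pdEdge, hvi, max_eq_right hiv, max_eq_right ((Nat.le_succ _).trans hiv)]
  have hn : max n (v + 1) = n := max_eq_left v.isLt
  calc β * ∑ i, pdEdge f β E v i ≤ ∑ i : Fin n, (H (i + 1) - H i) := by
        rw [mul_sum]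
        exact sum_le_sum fun i _ => hstep i
    _ = _ := by rw [Fin.sum_univ_sub]; simp only [H, hn, zero_max]

lemma mul_pdEdge_load_le (hf : IsAdmissibleAllocation f) (hβ : β ≠ 0) (v : Fin n) :
    β * (∑ u, pdEdge f β E u v + ∑ u, pdEdge f β E v u) ≤ 1 + f 0 := by
  obtain ⟨hy₀, hy₁⟩ := greedyPotential_mem_Icc f E n v
  have := hf.le_apply_zero (sub_nonneg.2 hy₁) (by linarith)
  have := mul_sum_pdEdge_left_le E hf hβ v
  have := mul_sum_pdEdge_right_le E hf hβ v
  rw [greedyPotential_succ_self, sub_sub_cancel] at this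
  linarith

lemma sum_greedyPotential_le_mul_sum_pdEdge (hf : IsAdmissibleAllocation f) (hβ : β ≠ 0) :
    ∑ v, greedyPotential f E n v ≤ β * ∑ i, ∑ j, pdEdge f β E j i := by
  let P : ℕ → ℝ := fun m => ∑ v, greedyPotential f E m v
  calc ∑ v, greedyPotential f E n v = ∑ i : Fin n, (P (i + 1) - P i) := by
        rw [Fin.sum_univ_sub]
        simp only [P, greedyPotential_zero, Pi.zero_apply, sum_const_zero, sub_zero]
    _ ≤ ∑ i, β * ∑ j, pdEdge f β E j i := sum_le_sum fun i _ => by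
        simpa [P, sum_greedyPotential_succ] using le_mul_sum_pdEdge_left E hf hβ i
    _ = β * ∑ i, ∑ j, pdEdge f β E j i := (mul_sum ..).symm

theorem sum_greedyPotential_le (hf : IsAdmissibleAllocation f) (ystar : Fin n → ℝ)
    (hstar : ∀ v, 0 ≤ ystar v) (hcov : ∀ i j, E i j = true → 1 ≤ ystar i + ystar j) :
    ∑ v, greedyPotential f E n v ≤ (1 + f 0) * ∑ v, ystar v := by
  have hβ : 0 < 1 + f 0 := by linarith [hf.pos 0 ⟨le_rfl, zero_le_one⟩]
  refine (hf.sum_greedyPotential_le_mul_sum_pdEdge E hβ.ne').trans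
    (mul_le_mul_of_nonneg_left ?_ hβ.le)
  refine sum_sum_le_sum_of_load_le_one (x := fun i j => pdEdge f (1 + f 0) E j i)
    (fun i j => hf.pdEdge_nonneg E hβ j i) (fun i j hpos => ?_) hstar fun v => ?_
  · have hji : j < i ∧ E j i = true := by
      by_contra h
      simp [pdEdge, h] at hpos
    linarith [hcov j i hji.2]
  · refine le_of_mul_le_mul_left ?_ hβ
    linarith [hf.mul_pdEdge_load_le E hβ.ne' v]

end IsAdmissibleAllocation

end Dual
lemma Real.rpow_mul_rpow_le_mul_add {A B A' B' p q : ℝ} (hA : 0 < A) (hB : 0 < B) (hA' : 0 ≤ A')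
    (hB' : 0 ≤ B') (hp : 0 ≤ p) (hq : 0 ≤ q) (hpq : p + q = 1) :
    A' ^ p * B' ^ q ≤ A ^ p * B ^ q * (p * (A' / A) + q * (B' / B)) := by
  have h := Real.geom_mean_le_arith_mean2_weighted hp hq (div_nonneg hA' hA.le)
    (div_nonneg hB' hB.le) hpq
  rw [Real.div_rpow hA' hA.le, Real.div_rpow hB' hB.le] at h
  have hAp : 0 < A ^ p := Real.rpow_pos_of_pos hA p
  have hBq : 0 < B ^ q := Real.rpow_pos_of_pos hB q
  calc A' ^ p * B' ^ q = A ^ p * B ^ q * (A' ^ p / A ^ p * (B' ^ q / B ^ q)) := by field_simp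
    _ ≤ _ := by gcongr

noncomputable def allocFun (k z : ℝ) : ℝ :=
  ((1 + k) / 2 - z) ^ ((1 + k) / (2 * k)) * (z + (k - 1) / 2) ^ ((k - 1) / (2 * k))

section AllocFun

variable {k : ℝ}

lemma continuous_allocFun (hk : 1 ≤ k) : Continuous (allocFun k) := by
  have hp : 0 ≤ (1 + k) / (2 * k) := div_nonneg (by linarith) (by linarith)
  have hq : 0 ≤ (k - 1) / (2 * k) := div_nonneg (by linarith) (by linarith)
  exact ((Real.continuous_rpow_const hp).comp (by fun_prop)).mul
    ((Real.continuous_rpow_const hq).comp (by fun_prop))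

lemma allocFun_pos {z : ℝ} (h₁ : z < (1 + k) / 2) (h₂ : -((k - 1) / 2) < z) :
    0 < allocFun k z :=
  mul_pos (Real.rpow_pos_of_pos (by linarith) _) (Real.rpow_pos_of_pos (by linarith) _)

lemma allocFun_one_sub (z : ℝ) :
    allocFun k (1 - z) =
      (z + (k - 1) / 2) ^ ((1 + k) / (2 * k)) * ((1 + k) / 2 - z) ^ ((k - 1) / (2 * k)) := by
  unfold allocFun
  congr 2 <;> ring

lemma allocFun_mul_allocFun_one_sub (hk : k ≠ 0) {z : ℝ} (h₁ : z ≤ (1 + k) / 2)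
    (h₂ : -((k - 1) / 2) ≤ z) :
    allocFun k z * allocFun k (1 - z) = ((1 + k) / 2 - z) * (z + (k - 1) / 2) := by
  have hpq : (1 + k) / (2 * k) + (k - 1) / (2 * k) = 1 := by field_simp; ring
  rw [allocFun_one_sub, allocFun]
  calc _ = ((1 + k) / 2 - z) ^ ((1 + k) / (2 * k)) * ((1 + k) / 2 - z) ^ ((k - 1) / (2 * k)) *
        ((z + (k - 1) / 2) ^ ((1 + k) / (2 * k)) * (z + (k - 1) / 2) ^ ((k - 1) / (2 * k))) := by
        ring
    _ = _ := by
        rw [← Real.rpow_add' (by linarith) (by rw [hpq]; norm_num),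
          ← Real.rpow_add' (by linarith) (by rw [hpq]; norm_num), hpq, Real.rpow_one,
          Real.rpow_one]

lemma allocFun_le_tangent (hk : 1 < k) {s t : ℝ} (hs₀ : 0 ≤ s) (hs₁ : s ≤ 1) (ht₀ : 0 ≤ t)
    (ht₁ : t ≤ 1) : allocFun k t ≤ allocFun k s - s / allocFun k (1 - s) * (t - s) := by
  have hk₀ : k ≠ 0 := (zero_lt_one.trans hk).ne'
  have hA : (1 + k) / 2 - s ≠ 0 := by linarith
  have hB : s + (k - 1) / 2 ≠ 0 := by linarith
  have hG : allocFun k (1 - s) ≠ 0 := (allocFun_pos (by linarith) (by linarith)).ne'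
  have hFG := allocFun_mul_allocFun_one_sub hk₀ (z := s) (by linarith) (by linarith)
  have hpq : (1 + k) / (2 * k) + (k - 1) / (2 * k) = 1 := by field_simp; ring
  have hqA :
      (k - 1) / (2 * k) * ((1 + k) / 2 - s) - (1 + k) / (2 * k) * (s + (k - 1) / 2) = -s := by
    field_simp; ring
  have hp : 0 ≤ (1 + k) / (2 * k) := div_nonneg (by linarith) (by linarith)
  have hq : 0 ≤ (k - 1) / (2 * k) := div_nonneg (by linarith) (by linarith)
  refine (Real.rpow_mul_rpow_le_mul_add (A := (1 + k) / 2 - s) (B := s + (k - 1) / 2)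
    (by linarith) (by linarith) (by linarith) (by linarith) hp hq hpq).trans_eq ?_
  rw [← allocFun, show (1 + k) / 2 - t = (1 + k) / 2 - s - (t - s) by ring,
    show t + (k - 1) / 2 = s + (k - 1) / 2 + (t - s) by ring]
  generalize (1 + k) / (2 * k) = p at hpq hqA ⊢
  generalize (k - 1) / (2 * k) = q at hpq hqA ⊢
  generalize (1 + k) / 2 - s = A at hA hqA hFG ⊢
  generalize s + (k - 1) / 2 = B at hB hqA hFG ⊢
  generalize allocFun k s = F at hFG ⊢
  generalize allocFun k (1 - s) = G at hG hFG ⊢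
  field_simp
  linear_combination (p * (A - (t - s)) * B + q * (B + (t - s)) * A - A * B) * hFG +
    A * B * A * B * hpq + A * B * (t - s) * hqA

lemma isAdmissibleAllocation_allocFun (hk : 1 < k) : IsAdmissibleAllocation (allocFun k) where
  continuousOn := (continuous_allocFun hk.le).continuousOn
  pos _ hz := allocFun_pos (by linarith [hz.2]) (by linarith [hz.1])
  le_tangent _ _ hs₀ hst ht₁ :=
    allocFun_le_tangent hk hs₀ (hst.trans ht₁) (hs₀.trans hst) ht₁

end AllocFun

lemma allocFun_six_fifths_zero_le : allocFun (6 / 5) 0 ≤ 0.901 := by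
  have h : allocFun (6 / 5) 0 = (11 / 10 : ℝ) ^ (11 / 12 : ℝ) * (1 / 10 : ℝ) ^ (1 / 12 : ℝ) := by
    norm_num [allocFun]
  have hpow : allocFun (6 / 5) 0 ^ 12 ≤ (0.901 : ℝ) ^ 12 := by
    rw [h, mul_pow, ← Real.rpow_natCast, ← Real.rpow_natCast ((1 / 10 : ℝ) ^ _),
      ← Real.rpow_mul (by norm_num), ← Real.rpow_mul (by norm_num)]
    norm_num
  exact le_of_pow_le_pow_left₀ (by norm_num) (by norm_num) hpow

/-- Main theorem: `GreedyAllocation` with the allocation function `f_{6/5}` is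
`1.901`-competitive for online fractional vertex cover in general graphs. -/
theorem greedyAllocation_1901 (k : ℝ) (hk : k = 6 / 5) (f : ℝ → ℝ)
    (hf : ∀ z, f z = ((1 + k) / 2 - z) ^ ((1 + k) / (2 * k)) *
                     (z + (k - 1) / 2) ^ ((k - 1) / (2 * k)))
    (n : ℕ) (E : Fin n → Fin n → Bool)
    (hsymm : ∀ i j, E i j = E j i) (hloop : ∀ i, E i i = false)
    (y : Fin n → ℝ) (hy : y = greedyPotential f E n) :
    (∀ v, y v ∈ Set.Icc (0:ℝ) 1) ∧
    (∀ i j, E i j = true → 1 ≤ y i + y j) ∧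
    (∀ ystar : Fin n → ℝ, (∀ v, ystar v ∈ Set.Icc (0:ℝ) 1) →
      (∀ i j, E i j = true → 1 ≤ ystar i + ystar j) →
      ∑ v, y v ≤ 1.901 * ∑ v, ystar v) := by
  have hfk : f = allocFun k := funext hf
  subst hy hfk hk
  refine ⟨greedyPotential_mem_Icc _ E n, one_le_greedyPotential_add _ E hsymm hloop,
    fun ystar hstar hcov => ?_⟩
  have hstar₀ (v : Fin n) : 0 ≤ ystar v := (hstar v).1
  calc ∑ v, greedyPotential (allocFun (6 / 5)) E n v
      ≤ (1 + allocFun (6 / 5) 0) * ∑ v, ystar v :=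
        (isAdmissibleAllocation_allocFun (by norm_num)).sum_greedyPotential_le E ystar hstar₀
          hcov
    _ ≤ 1.901 * ∑ v, ystar v := by
        gcongr
        · exact sum_nonneg fun v _ => hstar₀ v
        · linarith [allocFun_six_fifths_zero_le]
end
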